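/- Any maximal magnetic potential of the complete graph K_d is gauge equivalent to the anti-balanced signature σ̄ ≡ −1; equivalently, if σ̂: E^{or}(K_d) → S¹ satisfies λ₁^{σ̂}(K_d) = d−2, then σ̂(x_m,x_k) σ̂(x_k,x_l) σ̂(x_l,x_m) = −1 for all distinct vertices x_m, x_k, x_l, and σ̂ is gauge equivalent to σ̄. -/

import Mathlib

/-!
On `K_d` with `|σ| = 1`, expanding the energy gives `E(f) = (d - 1)‖f‖² - Re⟨f, A^σ f⟩`, so
`λ₁^σ ≥ d - 2` says `Re⟨f, A^σ f⟩ ≤ ‖f‖²` for every `f`. If a triangle product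
`σ(m,k) σ(k,l) σ(l,m) = e^{iθ}` had `|θ| < π`, a unimodular `f` on `{m, k, l}` could be chosen so
that every oriented edge of the triangle carries the phase `e^{iθ/3}`, whose real part exceeds `1/2`;
then `Re⟨f, A^σ f⟩ = 6 cos(θ/3) > 3 = ‖f‖²`. So every triangle product is `-1`, and then
`τ(x) = σ(x, p)`, `τ(p) = -1` gauges `σ` to `-1`.
-/

open Finset

variable {V : Type*} [Fintype V] {W : Type*} [Fintype W]

open scoped Classical in
noncomputable def magEnergy (G : SimpleGraph V) (σ : V → V → ℂ) (f : V → ℂ) : ℝ :=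
  (1/2) * ∑ x : V, ∑ y : V, if G.Adj x y then ‖f x - σ x y * f y‖ ^ 2 else 0

noncomputable def magDenom (f : V → ℂ) : ℝ := ∑ x : V, ‖f x‖ ^ 2

noncomputable def lambda1 (G : SimpleGraph V) (σ : V → V → ℂ) : ℝ :=
  sInf { r : ℝ | ∃ f : V → ℂ, f ≠ 0 ∧ r = magEnergy G σ f / magDenom f }

def IsMagPotential (G : SimpleGraph V) (σ : V → V → ℂ) : Prop :=
  (∀ x y, G.Adj x y → ‖σ x y‖ = 1) ∧
  (∀ x y, G.Adj x y → σ y x = (σ x y)⁻¹)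

noncomputable def magHeight (G : SimpleGraph V) : ℝ :=
  sSup { r : ℝ | ∃ σ : V → V → ℂ, IsMagPotential G σ ∧ r = lambda1 G σ }

open scoped Classical in
noncomputable def magLap (G : SimpleGraph V) (σ : V → V → ℂ) (f : V → ℂ) : V → ℂ :=
  fun x => ∑ y : V, if G.Adj x y then f x - σ x y * f y else 0

open ComplexConjugate Real

lemma magEnergy_nonneg (G : SimpleGraph V) (σ : V → V → ℂ) (f : V → ℂ) :
    0 ≤ magEnergy G σ f := by
  unfold magEnergy
  refine mul_nonneg (by norm_num) (sum_nonneg fun x _ => sum_nonneg fun y _ => ?_)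
  split_ifs <;> positivity

lemma magDenom_pos {f : V → ℂ} (hf : f ≠ 0) : 0 < magDenom f := by
  obtain ⟨x, hx⟩ := Function.ne_iff.mp hf
  exact sum_pos' (fun y _ => by positivity) ⟨x, mem_univ x, by positivity⟩

lemma lambda1_le_div (G : SimpleGraph V) (σ : V → V → ℂ) {f : V → ℂ} (hf : f ≠ 0) :
    lambda1 G σ ≤ magEnergy G σ f / magDenom f := by
  refine csInf_le ⟨0, ?_⟩ ⟨f, hf, rfl⟩
  rintro r ⟨g, hg, rfl⟩
  exact div_nonneg (magEnergy_nonneg G σ g) (magDenom_pos hg).le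

lemma IsMagPotential.symm_eq_conj {α : Type*} {G : SimpleGraph α} {σ : α → α → ℂ}
    (hσ : IsMagPotential G σ) {x y : α} (h : G.Adj x y) : σ y x = conj (σ x y) := by
  rw [hσ.2 x y h, Complex.inv_def, ← Complex.sq_norm, hσ.1 x y h]
  simp

lemma norm_sub_unit_mul_sq {a b s : ℂ} (hs : ‖s‖ = 1) :
    ‖a - s * b‖ ^ 2 = ‖a‖ ^ 2 + ‖b‖ ^ 2 - 2 * (conj a * s * b).re := by
  have : (a * conj (s * b)).re = (conj a * s * b).re := by
    rw [← Complex.conj_re]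
    congr 1
    simp only [map_mul, Complex.conj_conj]
    ring
  simp only [Complex.sq_norm, Complex.normSq_sub, Complex.normSq_mul, this]
  rw [← Complex.sq_norm s, hs]
  ring

open scoped Classical in
noncomputable def magAdjForm (G : SimpleGraph V) (σ : V → V → ℂ) (f : V → ℂ) : ℝ :=
  ∑ x, ∑ y, if G.Adj x y then (conj (f x) * σ x y * f y).re else 0

open scoped Classical in
lemma magEnergy_eq_sub_magAdjForm (G : SimpleGraph V) {σ : V → V → ℂ}
    (hσ : ∀ x y, G.Adj x y → ‖σ x y‖ = 1) (f : V → ℂ) :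
    magEnergy G σ f =
      (∑ x, ∑ y, if G.Adj x y then ‖f x‖ ^ 2 else 0) - magAdjForm G σ f := by
  have hswap : (∑ x, ∑ y, if G.Adj x y then ‖f y‖ ^ 2 else 0) =
      ∑ x, ∑ y, if G.Adj x y then ‖f x‖ ^ 2 else (0 : ℝ) := by
    rw [sum_comm]
    simp only [G.adj_comm]
  have hsplit : ∀ x y, (if G.Adj x y then ‖f x - σ x y * f y‖ ^ 2 else 0) =
      (if G.Adj x y then ‖f x‖ ^ 2 else 0) + (if G.Adj x y then ‖f y‖ ^ 2 else 0)
        - 2 * (if G.Adj x y then (conj (f x) * σ x y * f y).re else 0) := by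
    intro x y
    split_ifs with h
    · exact norm_sub_unit_mul_sq (hσ x y h)
    · ring
  simp only [magEnergy, magAdjForm, hsplit, sum_add_distrib, sum_sub_distrib, ← mul_sum, hswap]
  ring

lemma magEnergy_top {σ : V → V → ℂ} (hσ : IsMagPotential ⊤ σ) (f : V → ℂ) :
    magEnergy ⊤ σ f = (Fintype.card V - 1) * magDenom f - magAdjForm ⊤ σ f := by
  classical
  rw [magEnergy_eq_sub_magAdjForm ⊤ hσ.1]
  congr 1
  simp only [SimpleGraph.top_adj, sum_ite, sum_const_zero, add_zero, sum_const, nsmul_eq_mul,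
    magDenom, mul_sum]
  refine sum_congr rfl fun x _ => ?_
  rw [filter_ne, card_erase_of_mem (mem_univ x), card_univ,
    Nat.cast_sub (Fintype.card_pos_iff.mpr ⟨x⟩), Nat.cast_one]

lemma magAdjForm_le_magDenom {σ : V → V → ℂ} (hσ : IsMagPotential ⊤ σ)
    (hlow : (Fintype.card V : ℝ) - 2 ≤ lambda1 ⊤ σ) (f : V → ℂ) :
    magAdjForm ⊤ σ f ≤ magDenom f := by
  rcases eq_or_ne f 0 with rfl | hf
  · simp [magAdjForm, magDenom]
  have hD := magDenom_pos hf
  have h := hlow.trans (lambda1_le_div ⊤ σ hf)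
  rw [le_div_iff₀ hD, magEnergy_top hσ] at h
  linarith

lemma sum_eq_add_add_of_eq_zero {M : Type*} [AddCommMonoid M] {g : V → M} {m k l : V}
    (hmk : m ≠ k) (hkl : k ≠ l) (hlm : l ≠ m) (hg : ∀ x, x ≠ m → x ≠ k → x ≠ l → g x = 0) :
    ∑ x, g x = g m + g k + g l := by
  classical
  rw [← sum_subset (subset_univ {m, k, l}) fun x _ hx => by
    simp only [mem_insert, mem_singleton, not_or] at hx
    exact hg x hx.1 hx.2.1 hx.2.2]
  rw [sum_insert (by simp [hmk, hlm.symm]), sum_insert (by simp [hkl]), sum_singleton, add_assoc]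

lemma magDenom_eq_of_support_triangle {f : V → ℂ} {m k l : V}
    (hmk : m ≠ k) (hkl : k ≠ l) (hlm : l ≠ m) (hf : ∀ x, x ≠ m → x ≠ k → x ≠ l → f x = 0) :
    magDenom f = ‖f m‖ ^ 2 + ‖f k‖ ^ 2 + ‖f l‖ ^ 2 :=
  sum_eq_add_add_of_eq_zero hmk hkl hlm fun x hm hk hl => by simp [hf x hm hk hl]

lemma magAdjForm_top_of_support_triangle {σ : V → V → ℂ} (hσ : IsMagPotential ⊤ σ)
    {f : V → ℂ} {m k l : V} (hmk : m ≠ k) (hkl : k ≠ l) (hlm : l ≠ m)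
    (hf : ∀ x, x ≠ m → x ≠ k → x ≠ l → f x = 0) :
    magAdjForm ⊤ σ f = 2 * ((conj (f m) * σ m k * f k).re + (conj (f k) * σ k l * f l).re
      + (conj (f l) * σ l m * f m).re) := by
  classical
  have hrev : ∀ x y, x ≠ y → (conj (f y) * σ y x * f x).re = (conj (f x) * σ x y * f y).re := by
    intro x y hxy
    rw [hσ.symm_eq_conj (by simpa using hxy), ← Complex.conj_re]
    congr 1
    simp only [map_mul, Complex.conj_conj]
    ring
  have hrow : ∀ x, (∑ y, if x ≠ y then (conj (f x) * σ x y * f y).re else 0) =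
      (if x ≠ m then (conj (f x) * σ x m * f m).re else 0)
        + (if x ≠ k then (conj (f x) * σ x k * f k).re else 0)
        + (if x ≠ l then (conj (f x) * σ x l * f l).re else 0) :=
    fun x => sum_eq_add_add_of_eq_zero hmk hkl hlm fun y hm hk hl => by simp [hf y hm hk hl]
  simp only [magAdjForm, SimpleGraph.top_adj, hrow]
  rw [sum_eq_add_add_of_eq_zero hmk hkl hlm fun x hm hk hl => by simp [hf x hm hk hl]]
  simp only [ne_eq, not_true_eq_false, if_false, hmk, hkl, hlm, hmk.symm, hkl.symm, hlm.symm,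
    not_false_eq_true, if_true, hrev _ _ hmk, hrev _ _ hkl, hrev _ _ hlm]
  ring

lemma exists_cube_root_one_half_lt_re {z : ℂ} (hz : ‖z‖ = 1) (hz1 : z ≠ -1) :
    ∃ w : ℂ, ‖w‖ = 1 ∧ w ^ 3 = z ∧ 1 / 2 < w.re := by
  have hexp : Complex.exp (z.arg * Complex.I) = z := by
    simpa [hz] using Complex.norm_mul_exp_arg_mul_I z
  have hlt : z.arg < π := (Complex.arg_le_pi z).lt_of_ne fun h => hz1 <| by
    rw [← hexp, h, Complex.exp_pi_mul_I]
  have habs : |z.arg / 3| < π / 3 := by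
    rw [abs_div, abs_of_pos (by norm_num : (0 : ℝ) < 3)]
    linarith [abs_lt.mpr ⟨Complex.neg_pi_lt_arg z, hlt⟩]
  refine ⟨Complex.exp ((z.arg / 3 : ℝ) * Complex.I), Complex.norm_exp_ofReal_mul_I _, ?_, ?_⟩
  · rw [← Complex.exp_nat_mul]
    convert hexp using 2
    push_cast
    ring
  · rw [Complex.exp_ofReal_mul_I_re, ← cos_abs, ← cos_pi_div_three]
    exact cos_lt_cos_of_nonneg_of_le_pi (abs_nonneg _) (by linarith [pi_pos]) habs

lemma conj_mul_self_of_norm_eq_one {u : ℂ} (hu : ‖u‖ = 1) : conj u * u = 1 := by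
  simp [Complex.conj_mul', hu]

theorem IsMagPotential.triangle_eq_neg_one {σ : V → V → ℂ} (hσ : IsMagPotential ⊤ σ)
    (hlow : (Fintype.card V : ℝ) - 2 ≤ lambda1 ⊤ σ) {m k l : V}
    (hmk : m ≠ k) (hkl : k ≠ l) (hlm : l ≠ m) : σ m k * σ k l * σ l m = -1 := by
  classical
  by_contra hne
  have hu := hσ.1 m k (by simpa using hmk)
  have hv := hσ.1 k l (by simpa using hkl)
  have hs := hσ.1 l m (by simpa using hlm)
  obtain ⟨w, hw, hw3, hre⟩ := exists_cube_root_one_half_lt_re (by simp [hu, hv, hs]) hne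
  have hu' := conj_mul_self_of_norm_eq_one hu
  have hv' := conj_mul_self_of_norm_eq_one hv
  have hw' := conj_mul_self_of_norm_eq_one hw
  -- `f` is chosen so that each oriented edge of the triangle carries the same phase `w`
  set f : V → ℂ := fun x => if x = m then 1 else if x = k then conj (σ m k) * w
    else if x = l then conj (σ m k * σ k l) * w ^ 2 else 0 with hf
  have hf0 : ∀ x, x ≠ m → x ≠ k → x ≠ l → f x = 0 := by
    intro x hm hk hl
    simp [hf, hm, hk, hl]
  have hfm : f m = 1 := by simp [hf]
  have hfk : f k = conj (σ m k) * w := by simp [hf, hmk.symm]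
  have hfl : f l = conj (σ m k * σ k l) * w ^ 2 := by simp [hf, hlm, hkl.symm]
  have e1 : conj (f m) * σ m k * f k = w := by
    rw [hfm, hfk, map_one]
    linear_combination w * hu'
  have e2 : conj (f k) * σ k l * f l = w := by
    simp only [hfk, hfl, map_mul, Complex.conj_conj]
    linear_combination w * (σ k l * conj (σ k l) * w * conj w) * hu' + w * (w * conj w) * hv'
      + w * hw'
  have e3 : conj (f l) * σ l m * f m = w := by
    simp only [hfm, hfl, map_mul, map_pow, Complex.conj_conj, mul_one]
    linear_combination -(conj w) ^ 2 * hw3 + w * (conj w * w + 1) * hw'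
  have hA := magAdjForm_le_magDenom hσ hlow f
  rw [magAdjForm_top_of_support_triangle hσ hmk hkl hlm hf0,
    magDenom_eq_of_support_triangle hmk hkl hlm hf0, e1, e2, e3] at hA
  have hnk : ‖f k‖ = 1 := by simp [hfk, hu, hw]
  have hnl : ‖f l‖ = 1 := by simp [hfl, hu, hv, hw]
  rw [hfm, norm_one, hnk, hnl] at hA
  linarith

theorem IsMagPotential.exists_gauge_eq_neg_one {α : Type*} {σ : α → α → ℂ}
    (hσ : IsMagPotential ⊤ σ)
    (htri : ∀ m k l, m ≠ k → k ≠ l → l ≠ m → σ m k * σ k l * σ l m = -1) (p : α) :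
    ∃ τ : α → ℂ, (∀ x, ‖τ x‖ = 1) ∧ ∀ x y, x ≠ y → (τ x)⁻¹ * σ x y * τ y = -1 := by
  classical
  have hinv : ∀ x y, x ≠ y → σ y x = (σ x y)⁻¹ := fun x y h => hσ.2 x y (by simpa using h)
  have hne0 : ∀ x y, x ≠ y → σ x y ≠ 0 := fun x y h =>
    norm_ne_zero_iff.mp (by rw [hσ.1 x y (by simpa using h)]; exact one_ne_zero)
  refine ⟨fun x => if x = p then -1 else σ x p, fun x => ?_, fun x y hxy => ?_⟩
  · dsimp only
    split_ifs with hx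
    · simp
    · exact hσ.1 x p (by simpa using hx)
  rcases eq_or_ne x p with rfl | hx
  · simp only [if_neg hxy.symm, if_true, hinv x y hxy]
    field_simp [hne0 x y hxy]
  rcases eq_or_ne y p with rfl | hy
  · simp only [if_neg hx, if_true]
    field_simp [hne0 x y hx]
  · simp only [if_neg hx, if_neg hy]
    have h := htri x y p hxy hy hx.symm
    rw [hinv x p hx] at h
    field_simp [hne0 x p hx] at h ⊢
    linear_combination h

theorem complete_maximal_potential_antibalanced (d : ℕ) (hd : 3 ≤ d)
    (σ : Fin d → Fin d → ℂ)
    (hσ : IsMagPotential (⊤ : SimpleGraph (Fin d)) σ)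
    (hmax : lambda1 (⊤ : SimpleGraph (Fin d)) σ = (d : ℝ) - 2) :
    (∀ m k l : Fin d, m ≠ k → k ≠ l → l ≠ m → σ m k * σ k l * σ l m = -1) ∧
    ∃ τ : Fin d → ℂ, (∀ x, ‖τ x‖ = 1) ∧
      ∀ x y : Fin d, x ≠ y → (τ x)⁻¹ * σ x y * τ y = -1 := by
  have hlow : (Fintype.card (Fin d) : ℝ) - 2 ≤ lambda1 ⊤ σ := by
    rw [Fintype.card_fin, hmax]
  have htri : ∀ m k l : Fin d, m ≠ k → k ≠ l → l ≠ m → σ m k * σ k l * σ l m = -1 :=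
    fun _ _ _ => hσ.triangle_eq_neg_one hlow
  exact ⟨htri, hσ.exists_gauge_eq_neg_one htri ⟨0, by omega⟩⟩
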